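/- arXiv:1701.03040 — 5 statements merged into one kernel-verified Lean document; each statement's English description precedes it below -/
import Mathlib

section
/- For any finite simple graph G and any set S of vertices with positive difference d(S) = |S| - |N(S)| > 0 that is inclusion-minimal with this property (no proper subset of S has positive difference), the set S is independent. -/
open Classical Finset

/-- Neighborhood of a set of vertices: all vertices adjacent to some vertex of `X`. -/
noncomputable def nbhd {V : Type*} (G : SimpleGraph V) [Fintype V] (X : Finset V) : Finset V :=
  Finset.univ.filter (fun v => ∃ x ∈ X, G.Adj x v)

/-- The difference `d(X) = |X| - |N(X)|`. -/
noncomputable def gdiff {V : Type*} (G : SimpleGraph V) [Fintype V] (X : Finset V) : ℤ :=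
  (X.card : ℤ) - ((nbhd G X).card : ℤ)

/-- `X` is an independent set of `G`. -/
def IsIndep {V : Type*} (G : SimpleGraph V) (X : Finset V) : Prop :=
  ∀ x ∈ X, ∀ y ∈ X, ¬ G.Adj x y

/-- The critical difference `d_c(G) = max { d(X) : X ⊆ V(G) }`. -/
noncomputable def critDiff {V : Type*} (G : SimpleGraph V) [Fintype V] : ℤ :=
  Finset.univ.powerset.sup' ⟨∅, Finset.empty_mem_powerset _⟩ (gdiff G)

/-- `X` is a critical set of `G`. -/
noncomputable def IsCritical {V : Type*} (G : SimpleGraph V) [Fintype V] (X : Finset V) : Prop :=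
  gdiff G X = critDiff G

/-- `ker G` : the intersection of all critical sets of `G`. -/
noncomputable def kerG {V : Type*} (G : SimpleGraph V) [Fintype V] : Finset V :=
  Finset.univ.filter (fun v => ∀ X : Finset V, IsCritical G X → v ∈ X)

/-- `diadem G` : the union of all critical independent sets of `G`. -/
noncomputable def diademG {V : Type*} (G : SimpleGraph V) [Fintype V] : Finset V :=
  Finset.univ.filter (fun v => ∃ X : Finset V, IsCritical G X ∧ IsIndep G X ∧ v ∈ X)

/-- The independence number `α(G)`. -/
noncomputable def alphaG {V : Type*} (G : SimpleGraph V) [Fintype V] : ℕ :=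
  (Finset.univ.powerset.filter (IsIndep G)).sup Finset.card

/-- `core G` : the intersection of all maximum independent sets of `G`. -/
noncomputable def coreG {V : Type*} (G : SimpleGraph V) [Fintype V] : Finset V :=
  Finset.univ.filter (fun v => ∀ I : Finset V, IsIndep G I → I.card = alphaG G → v ∈ I)

/-- `M` is a matching of `G`, given as a finite set of pairwise disjoint edges of `G`. -/
def IsMatchingF {V : Type*} (G : SimpleGraph V) (M : Finset (Sym2 V)) : Prop :=
  (↑M : Set (Sym2 V)) ⊆ G.edgeSet ∧
    ∀ e₁ ∈ M, ∀ e₂ ∈ M, e₁ ≠ e₂ → ∀ v : V, v ∈ e₁ → v ∉ e₂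

/-- The matching number `μ(G)`. -/
noncomputable def matchNum {V : Type*} (G : SimpleGraph V) [Fintype V] : ℕ :=
  ((Finset.univ : Finset (Finset (Sym2 V))).filter (IsMatchingF G)).sup Finset.card

/-- There is a matching from `A` into `B`: an injection of `A` into `B` along edges of `G`. -/
def MatchingFromInto {V : Type*} (G : SimpleGraph V) (A B : Finset V) : Prop :=
  ∃ f : V → V, Set.InjOn f ↑A ∧ ∀ a ∈ A, f a ∈ B ∧ G.Adj a (f a)

/-- The auxiliary bipartite graph `H_X` on vertex set `X ∪ N(X) ∪ {v, w}`, where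
`v = Sum.inr false` and `w = Sum.inr true`.  Its edges are the edges of `G` between
`X` and `N(X)`, the edge `vw`, and all edges from `v` to `N(X)`. -/
noncomputable def HX {V : Type*} (G : SimpleGraph V) [Fintype V] (X : Finset V) :
    SimpleGraph ({a : V // a ∈ X ∪ nbhd G X} ⊕ Bool) :=
  SimpleGraph.fromRel (fun p q =>
    match p, q with
    | Sum.inl a, Sum.inl b => a.1 ∈ X ∧ b.1 ∈ nbhd G X ∧ G.Adj a.1 b.1
    | Sum.inr false, Sum.inr true => True
    | Sum.inr false, Sum.inl b => b.1 ∈ nbhd G X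
    | _, _ => False)

/-- The copy of `X` inside the vertex set of `H_X`. -/
noncomputable def Xlift {V : Type*} (G : SimpleGraph V) [Fintype V] (X : Finset V) :
    Finset ({a : V // a ∈ X ∪ nbhd G X} ⊕ Bool) :=
  Finset.univ.filter (fun p => ∃ a : {a : V // a ∈ X ∪ nbhd G X}, p = Sum.inl a ∧ a.1 ∈ X)

/-- Edmonds–Gallai set `D`: vertices missed by some maximum matching. -/
noncomputable def gallaiD {V : Type*} (G : SimpleGraph V) [Fintype V] : Finset V :=
  Finset.univ.filter (fun v => ∃ M : Finset (Sym2 V),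
    IsMatchingF G M ∧ M.card = matchNum G ∧ ∀ e ∈ M, v ∉ e)

/-- Edmonds–Gallai set `A = N(D) - D`. -/
noncomputable def gallaiA {V : Type*} (G : SimpleGraph V) [Fintype V] : Finset V :=
  nbhd G (gallaiD G) \ gallaiD G

/-- Edmonds–Gallai set `C = V - A - D`. -/
noncomputable def gallaiC {V : Type*} (G : SimpleGraph V) [Fintype V] : Finset V :=
  (Finset.univ \ gallaiD G) \ gallaiA G

/-- The vertices of the singleton components of `G[D]`. -/
noncomputable def singlesD {V : Type*} (G : SimpleGraph V) [Fintype V] : Finset V :=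
  (gallaiD G).filter (fun v => ∀ w ∈ gallaiD G, ¬ G.Adj v w)

/-- an inclusion-minimal set with positive difference is independent. -/
theorem stmt0 {V : Type*} (G : SimpleGraph V) [Fintype V] [DecidableEq V] [DecidableRel G.Adj]
    (S : Finset V) (hpos : 0 < gdiff G S) (hmin : ∀ T ⊂ S, gdiff G T ≤ 0) :
    IsIndep G S := by
  intro x hx y hy hadj
  set I := S.filter (fun v => ∀ w ∈ S, ¬ G.Adj v w) with hI
  have hIsub : I ⊆ S := Finset.filter_subset _ _
  have hyI : y ∉ I := fun h => (Finset.mem_filter.mp h).2 x hx hadj.symm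
  have hss : I ⊂ S := ⟨hIsub, fun h => hyI (h hy)⟩
  have hdisj : Disjoint (nbhd G I) (S \ I) := by
    rw [Finset.disjoint_left]
    intro v hv hv2
    simp only [nbhd, Finset.mem_filter, Finset.mem_univ, true_and] at hv
    obtain ⟨i, hiI, hadj'⟩ := hv
    exact (Finset.mem_filter.mp hiI).2 v (Finset.mem_sdiff.mp hv2).1 hadj'
  have hsub : nbhd G I ∪ (S \ I) ⊆ nbhd G S := by
    intro v hv
    rcases Finset.mem_union.mp hv with h | h
    · simp only [nbhd, Finset.mem_filter, Finset.mem_univ, true_and] at h ⊢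
      obtain ⟨i, hiI, ha⟩ := h
      exact ⟨i, hIsub hiI, ha⟩
    · obtain ⟨hvS, hvI⟩ := Finset.mem_sdiff.mp h
      have : ¬ ∀ w ∈ S, ¬ G.Adj v w := by
        intro hall
        exact hvI (Finset.mem_filter.mpr ⟨hvS, hall⟩)
      push_neg at this
      obtain ⟨w, hwS, haw⟩ := this
      simp only [nbhd, Finset.mem_filter, Finset.mem_univ, true_and]
      exact ⟨w, hwS, haw.symm⟩
  have hcard : (nbhd G I).card + (S \ I).card ≤ (nbhd G S).card := by
    rw [← Finset.card_union_of_disjoint hdisj]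
    exact Finset.card_le_card hsub
  have hsd : (S \ I).card = S.card - I.card := Finset.card_sdiff_of_subset hIsub
  have hIc : I.card ≤ S.card := Finset.card_le_card hIsub
  have h1 := hmin I hss
  simp only [gdiff] at h1 hpos
  omega
end

section
/- If X and Y are critical sets of G (i.e., d(X) = d(Y) = d_c(G), the maximum of d over all subsets of V(G)), then X ∪ Y and X ∩ Y are also critical. -/
open Classical Finset

/-- unions and intersections of critical sets are critical. -/
theorem stmt2 {V : Type*} (G : SimpleGraph V) [Fintype V] [DecidableEq V] [DecidableRel G.Adj]
    (X Y : Finset V) (hX : IsCritical G X) (hY : IsCritical G Y) :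
    IsCritical G (X ∪ Y) ∧ IsCritical G (X ∩ Y) := by
  classical
  have hle : ∀ Z : Finset V, gdiff G Z ≤ critDiff G := fun Z =>
    Finset.le_sup' (gdiff G) (Finset.mem_powerset.2 (Finset.subset_univ Z))
  have hNU : nbhd G (X ∪ Y) = nbhd G X ∪ nbhd G Y := by
    ext v
    simp only [nbhd, Finset.mem_filter, Finset.mem_univ, true_and, Finset.mem_union]
    constructor
    · rintro ⟨x, hx | hx, hadj⟩
      · exact Or.inl ⟨x, hx, hadj⟩
      · exact Or.inr ⟨x, hx, hadj⟩
    · rintro (⟨x, hx, hadj⟩ | ⟨x, hx, hadj⟩)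
      · exact ⟨x, Or.inl hx, hadj⟩
      · exact ⟨x, Or.inr hx, hadj⟩
  have hNI : nbhd G (X ∩ Y) ⊆ nbhd G X ∩ nbhd G Y := by
    intro v hv
    simp only [nbhd, Finset.mem_filter, Finset.mem_univ, true_and, Finset.mem_inter] at *
    obtain ⟨x, ⟨hx1, hx2⟩, hadj⟩ := hv
    exact ⟨⟨x, hx1, hadj⟩, ⟨x, hx2, hadj⟩⟩
  have hcardN : (nbhd G (X ∪ Y)).card + (nbhd G (X ∩ Y)).card
      ≤ (nbhd G X).card + (nbhd G Y).card := by
    calc (nbhd G (X ∪ Y)).card + (nbhd G (X ∩ Y)).card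
        ≤ (nbhd G X ∪ nbhd G Y).card + (nbhd G X ∩ nbhd G Y).card := by
          rw [hNU]; exact Nat.add_le_add_left (Finset.card_le_card hNI) _
      _ = (nbhd G X).card + (nbhd G Y).card := Finset.card_union_add_card_inter _ _
  have hcard : (X ∪ Y).card + (X ∩ Y).card = X.card + Y.card :=
    Finset.card_union_add_card_inter _ _
  have hsum : gdiff G X + gdiff G Y ≤ gdiff G (X ∪ Y) + gdiff G (X ∩ Y) := by
    unfold gdiff
    have h1 : ((X ∪ Y).card : ℤ) + ((X ∩ Y).card : ℤ) = (X.card : ℤ) + Y.card := by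
      exact_mod_cast hcard
    have h2 : ((nbhd G (X ∪ Y)).card : ℤ) + ((nbhd G (X ∩ Y)).card : ℤ)
        ≤ ((nbhd G X).card : ℤ) + ((nbhd G Y).card : ℤ) := by exact_mod_cast hcardN
    linarith
  have h1 := hle (X ∪ Y)
  have h2 := hle (X ∩ Y)
  unfold IsCritical at *
  constructor <;> linarith [hX, hY]
end

section
/- If S is an inclusion-minimal set with d(S) > 0 (i.e., d(S) > 0 and every proper subset T ⊊ S satisfies d(T) ≤ 0), then d(S) = 1. -/
open Classical Finset

/-- an inclusion-minimal set with positive difference has difference exactly 1. -/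
theorem stmt3 {V : Type*} (G : SimpleGraph V) [Fintype V] [DecidableEq V] [DecidableRel G.Adj]
    (S : Finset V) (hpos : 0 < gdiff G S) (hmin : ∀ T ⊂ S, gdiff G T ≤ 0) :
    gdiff G S = 1 := by
  have hne : S.Nonempty := by
    rcases S.eq_empty_or_nonempty with h | h
    · subst h
      have hnb : nbhd G ∅ = ∅ := by ext v; simp [nbhd]
      simp [gdiff, hnb] at hpos
    · exact h
  obtain ⟨x, hx⟩ := hne
  have hsub : S.erase x ⊂ S := Finset.erase_ssubset hx
  have hT := hmin _ hsub
  have hmono : nbhd G (S.erase x) ⊆ nbhd G S := by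
    intro v hv
    simp only [nbhd, Finset.mem_filter] at hv ⊢
    obtain ⟨_, a, ha, hadj⟩ := hv
    exact ⟨Finset.mem_univ v, a, Finset.mem_of_mem_erase ha, hadj⟩
  have h1 : ((nbhd G (S.erase x)).card : ℤ) ≤ (nbhd G S).card :=
    Int.ofNat_le.mpr (Finset.card_le_card hmono)
  have h2 : ((S.erase x).card : ℤ) = (S.card : ℤ) - 1 := by
    rw [Finset.card_erase_of_mem hx]
    have : 1 ≤ S.card := Finset.card_pos.mpr ⟨x, hx⟩
    omega
  unfold gdiff at hT hpos ⊢
  omega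
end

section
/- Let X be an independent set of G with d(X) > 0 such that every proper subset Y ⊊ X satisfies d(Y) < d(X). Define a bipartite graph H_X with vertex set X ∪ N(X) ∪ {v, w} (v, w two new vertices), and edge set consisting of the edges of G between X and N(X), the edge vw, and all edges vx for x ∈ N(X). Then the only maximum independent sets of H_X are X ∪ {v} and X ∪ {w}; in particular core(H_X) = X. -/
open Classical Finset

/-! An independent set `I` of `H_X` splits as `A ∪ B ∪ S` with `A ⊆ X`, `B ⊆ N(X)` and
`S ⊆ {v, w}`. Independence forces `B ∩ N(A) = ∅`, so `|B| ≤ |N(X)| - |N(A)|`, and `d(A) ≤ d(X)`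
turns this into `|A| + |B| ≤ |X|`; as `vw` is an edge, `|S| ≤ 1`. Hence `α(H_X) = |X| + 1`,
attained by `X ∪ {v}` and `X ∪ {w}`. If `|I| = |X| + 1` then `d(A) = d(X)`, so `A = X` by the
minimality of `X`, and then `B ⊆ N(X) \ N(X) = ∅`. -/

section Deficiency

variable {V : Type*} {G : SimpleGraph V} [Fintype V] {X A B : Finset V}

lemma mem_nbhd {v : V} : v ∈ nbhd G X ↔ ∃ x ∈ X, G.Adj x v := by
  simp [nbhd]

lemma nbhd_mono (h : A ⊆ X) : nbhd G A ⊆ nbhd G X := by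
  intro v
  simp only [mem_nbhd]
  exact fun ⟨x, hx, hxv⟩ => ⟨x, h hx, hxv⟩

lemma IsIndep.disjoint_nbhd (hX : IsIndep G X) : Disjoint X (nbhd G X) := by
  rw [Finset.disjoint_left]
  intro a ha haN
  obtain ⟨x, hx, hxa⟩ := mem_nbhd.mp haN
  exact hX x hx a ha hxa

lemma card_add_card_nbhd_le (hA : A ⊆ X) (hB : B ⊆ nbhd G X) (hAB : Disjoint B (nbhd G A)) :
    B.card + (nbhd G A).card ≤ (nbhd G X).card := by
  rw [← Finset.card_union_of_disjoint hAB]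
  exact Finset.card_le_card (Finset.union_subset hB (nbhd_mono hA))

lemma card_add_card_le_of_disjoint_nbhd (hmin : ∀ Y ⊂ X, gdiff G Y < gdiff G X) (hA : A ⊆ X)
    (hB : B ⊆ nbhd G X) (hAB : Disjoint B (nbhd G A)) : A.card + B.card ≤ X.card := by
  have hdA : gdiff G A ≤ gdiff G X := by
    rcases hA.eq_or_ssubset with rfl | hlt
    · exact le_rfl
    · exact (hmin A hlt).le
  have := card_add_card_nbhd_le hA hB hAB
  simp only [gdiff] at hdA
  omega

lemma eq_and_eq_empty_of_card_add_card_eq (hmin : ∀ Y ⊂ X, gdiff G Y < gdiff G X)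
    (hA : A ⊆ X) (hB : B ⊆ nbhd G X) (hAB : Disjoint B (nbhd G A))
    (heq : A.card + B.card = X.card) : A = X ∧ B = ∅ := by
  have hAX : A = X := by
    refine hA.eq_or_ssubset.resolve_right fun hlt => ?_
    have hdA := hmin A hlt
    have := card_add_card_nbhd_le hA hB hAB
    simp only [gdiff] at hdA
    omega
  subst hAX
  exact ⟨rfl, Finset.subset_empty.mp fun b hb => (Finset.disjoint_left.mp hAB hb (hB hb)).elim⟩

end Deficiency

section MaximumIndependentSets

variable {W : Type*} [Fintype W] {H : SimpleGraph W}

lemma alphaG_eq_card_of_forall_card_le {J : Finset W} (hJ : IsIndep H J)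
    (hle : ∀ I, IsIndep H I → I.card ≤ J.card) : alphaG H = J.card := by
  refine le_antisymm (Finset.sup_le fun I hI => hle I (Finset.mem_filter.mp hI).2) ?_
  exact Finset.le_sup (f := Finset.card)
    (Finset.mem_filter.mpr ⟨Finset.mem_powerset.mpr (Finset.subset_univ J), hJ⟩)

lemma coreG_eq_inter_of_forall_iff [DecidableEq W] {J₁ J₂ : Finset W}
    (h : ∀ I, (IsIndep H I ∧ I.card = alphaG H) ↔ I = J₁ ∨ I = J₂) : coreG H = J₁ ∩ J₂ := by
  ext v
  simp only [coreG, Finset.mem_filter, Finset.mem_univ, true_and, Finset.mem_inter]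
  constructor
  · intro hv
    obtain ⟨hJ₁, hJ₁card⟩ := (h J₁).mpr (.inl rfl)
    obtain ⟨hJ₂, hJ₂card⟩ := (h J₂).mpr (.inr rfl)
    exact ⟨hv J₁ hJ₁ hJ₁card, hv J₂ hJ₂ hJ₂card⟩
  · rintro ⟨hv₁, hv₂⟩ I hI hIcard
    rcases (h I).mp ⟨hI, hIcard⟩ with rfl | rfl
    exacts [hv₁, hv₂]

end MaximumIndependentSets

def toLeftVal {α β : Type*} {p : α → Prop} (I : Finset (Subtype p ⊕ β)) : Finset α :=
  I.toLeft.map (Function.Embedding.subtype p)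

section ToLeftVal

variable {α β : Type*} {p : α → Prop} {I : Finset (Subtype p ⊕ β)}

lemma mem_toLeftVal {x : α} : x ∈ toLeftVal I ↔ ∃ h : p x, .inl ⟨x, h⟩ ∈ I := by
  simp [toLeftVal]

@[simp]
lemma val_mem_toLeftVal {a : Subtype p} : a.1 ∈ toLeftVal I ↔ .inl a ∈ I := by
  rw [← Finset.mem_toLeft]
  exact Finset.mem_map' _

lemma card_toLeftVal_add_card_toRight : (toLeftVal I).card + I.toRight.card = I.card := by
  rw [toLeftVal, Finset.card_map, Finset.card_toLeft_add_card_toRight]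

end ToLeftVal

section AuxiliaryGraph

variable {V : Type*} {G : SimpleGraph V} [Fintype V] {X : Finset V}
  {I : Finset ({a : V // a ∈ X ∪ nbhd G X} ⊕ Bool)}

@[simp]
lemma inl_mem_Xlift {a : {a : V // a ∈ X ∪ nbhd G X}} : .inl a ∈ Xlift G X ↔ a.1 ∈ X := by
  simp only [Xlift, mem_filter, mem_univ, true_and, Sum.inl.injEq, exists_eq_left']

@[simp]
lemma inr_notMem_Xlift {b : Bool} : .inr b ∉ Xlift G X := by
  simp [Xlift]

lemma HX_adj_inl_inl {a b : {a : V // a ∈ X ∪ nbhd G X}} (ha : a.1 ∈ X) (hb : b.1 ∈ nbhd G X)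
    (hab : G.Adj a b) : (HX G X).Adj (.inl a) (.inl b) := by
  rw [HX, SimpleGraph.fromRel_adj]
  exact ⟨fun h => G.ne_of_adj hab (by cases h; rfl), Or.inl ⟨ha, hb, hab⟩⟩

lemma HX_adj_inr : (HX G X).Adj (.inr false) (.inr true) := by
  simp [HX]

lemma IsIndep.exists_eq_inl_of_HX_adj (hX : IsIndep G X) {a : {a : V // a ∈ X ∪ nbhd G X}}
    {q : {a : V // a ∈ X ∪ nbhd G X} ⊕ Bool} (ha : a.1 ∈ X) (hq : (HX G X).Adj (.inl a) q) :
    ∃ b, q = .inl b ∧ b.1 ∈ nbhd G X := by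
  rw [HX, SimpleGraph.fromRel_adj] at hq
  rcases q with b | (_ | _)
  · rcases hq.2 with ⟨-, hb, -⟩ | ⟨-, haN, -⟩
    · exact ⟨b, rfl, hb⟩
    · exact (Finset.disjoint_left.mp hX.disjoint_nbhd ha haN).elim
  · rcases hq.2 with h | h
    · cases h
    · exact (Finset.disjoint_left.mp hX.disjoint_nbhd ha h).elim
  · rcases hq.2 with h | h <;> cases h

lemma eq_Xlift_union_iff (I : Finset ({a : V // a ∈ X ∪ nbhd G X} ⊕ Bool)) (b : Bool) :
    I = Xlift G X ∪ {.inr b} ↔ toLeftVal I = X ∧ I.toRight = {b} := by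
  constructor
  · rintro rfl
    constructor <;> ext
    · simp +contextual [mem_toLeftVal]
    · simp
  · rintro ⟨hL, hR⟩
    ext (a | c)
    · rw [← val_mem_toLeftVal, hL]
      simp
    · rw [← Finset.mem_toRight, hR]
      simp

lemma IsIndep.card_toRight_le_one (hI : IsIndep (HX G X) I) : I.toRight.card ≤ 1 := by
  rw [Finset.card_le_one]
  intro b hb c hc
  by_contra hbc
  rw [Finset.mem_toRight] at hb hc
  rcases b with _ | _ <;> rcases c with _ | _
  all_goals first
    | exact hbc rfl
    | exact hI _ hb _ hc HX_adj_inr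
    | exact hI _ hc _ hb HX_adj_inr

lemma toLeftVal_sdiff_subset_nbhd : toLeftVal I \ X ⊆ nbhd G X := by
  intro b hb
  rw [Finset.mem_sdiff] at hb
  exact (Finset.mem_union.mp (mem_toLeftVal.mp hb.1).1).resolve_left hb.2

lemma IsIndep.disjoint_sdiff_nbhd_inter (hI : IsIndep (HX G X) I) :
    Disjoint (toLeftVal I \ X) (nbhd G (toLeftVal I ∩ X)) := by
  rw [Finset.disjoint_left]
  intro b hb hbN
  obtain ⟨a, haLX, hab⟩ := mem_nbhd.mp hbN
  obtain ⟨haL, haX⟩ := Finset.mem_inter.mp haLX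
  obtain ⟨_, haI⟩ := mem_toLeftVal.mp haL
  obtain ⟨_, hbI⟩ := mem_toLeftVal.mp (Finset.mem_sdiff.mp hb).1
  exact hI _ haI _ hbI (HX_adj_inl_inl haX (toLeftVal_sdiff_subset_nbhd hb) hab)

lemma card_toLeftVal_le (hmin : ∀ Y ⊂ X, gdiff G Y < gdiff G X) (hI : IsIndep (HX G X) I) :
    (toLeftVal I).card ≤ X.card := by
  simpa using card_add_card_le_of_disjoint_nbhd hmin Finset.inter_subset_right
    toLeftVal_sdiff_subset_nbhd hI.disjoint_sdiff_nbhd_inter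

lemma toLeftVal_eq_of_card_eq (hmin : ∀ Y ⊂ X, gdiff G Y < gdiff G X)
    (hI : IsIndep (HX G X) I) (hcard : (toLeftVal I).card = X.card) : toLeftVal I = X := by
  obtain ⟨hinter, hsdiff⟩ := eq_and_eq_empty_of_card_add_card_eq hmin Finset.inter_subset_right
    toLeftVal_sdiff_subset_nbhd hI.disjoint_sdiff_nbhd_inter (by simpa using hcard)
  exact (Finset.sdiff_eq_empty_iff_subset.mp hsdiff).antisymm (Finset.inter_eq_right.mp hinter)

lemma card_le_of_isIndep_HX (hmin : ∀ Y ⊂ X, gdiff G Y < gdiff G X)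
    (hI : IsIndep (HX G X) I) : I.card ≤ X.card + 1 := by
  have := card_toLeftVal_add_card_toRight (I := I)
  have := card_toLeftVal_le hmin hI
  have := hI.card_toRight_le_one
  omega

lemma eq_Xlift_union_of_isIndep_HX (hmin : ∀ Y ⊂ X, gdiff G Y < gdiff G X)
    (hI : IsIndep (HX G X) I) (hcard : I.card = X.card + 1) :
    I = Xlift G X ∪ {.inr false} ∨ I = Xlift G X ∪ {.inr true} := by
  have := card_toLeftVal_add_card_toRight (I := I)
  have := card_toLeftVal_le hmin hI
  have := hI.card_toRight_le_one
  have hL := toLeftVal_eq_of_card_eq hmin hI (by omega)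
  obtain ⟨b, hR⟩ := Finset.card_eq_one.mp (show I.toRight.card = 1 by omega)
  cases b
  · exact .inl ((eq_Xlift_union_iff I false).mpr ⟨hL, hR⟩)
  · exact .inr ((eq_Xlift_union_iff I true).mpr ⟨hL, hR⟩)
lemma isIndep_Xlift_union (hX : IsIndep G X) (b : Bool) :
    IsIndep (HX G X) (Xlift G X ∪ {.inr b}) := by
  have hinl : ∀ a q, .inl a ∈ Xlift G X ∪ {.inr b} → q ∈ Xlift G X ∪ {.inr b} →
      ¬ (HX G X).Adj (.inl a) q := by
    intro a q ha hq haq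
    have haX : a.1 ∈ X := by simpa using ha
    obtain ⟨c, rfl, hcN⟩ := hX.exists_eq_inl_of_HX_adj haX haq
    have hcX : c.1 ∈ X := by simpa using hq
    exact Finset.disjoint_left.mp hX.disjoint_nbhd hcX hcN
  rintro (a | c) hp q hq hpq
  · exact hinl a q hp hq hpq
  rcases q with a | d
  · exact hinl a _ hq hp hpq.symm
  · simp only [Finset.mem_union, inr_notMem_Xlift, Finset.mem_singleton, Sum.inr.injEq,
      false_or] at hp hq
    subst hp hq
    exact hpq.ne rfl

lemma card_Xlift_union (b : Bool) : (Xlift G X ∪ {.inr b}).card = X.card + 1 := by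
  obtain ⟨hL, hR⟩ := (eq_Xlift_union_iff (Xlift G X ∪ {.inr b}) b).mp rfl
  rw [← card_toLeftVal_add_card_toRight, hL, hR, Finset.card_singleton]

lemma Xlift_union_inter_Xlift_union :
    (Xlift G X ∪ {.inr false}) ∩ (Xlift G X ∪ {.inr true}) = Xlift G X := by
  rw [← Finset.union_inter_distrib_left]
  simp

end AuxiliaryGraph

theorem stmt4_general {V : Type*} (G : SimpleGraph V) [Fintype V]
    (X : Finset V) (hind : IsIndep G X)
    (hmin : ∀ Y ⊂ X, gdiff G Y < gdiff G X) :
    (∀ I : Finset ({a : V // a ∈ X ∪ nbhd G X} ⊕ Bool),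
        (IsIndep (HX G X) I ∧ I.card = alphaG (HX G X)) ↔
          (I = Xlift G X ∪ {Sum.inr false} ∨ I = Xlift G X ∪ {Sum.inr true})) ∧
    coreG (HX G X) = Xlift G X := by
  have halpha : alphaG (HX G X) = X.card + 1 := by
    rw [alphaG_eq_card_of_forall_card_le (isIndep_Xlift_union hind false), card_Xlift_union]
    intro I hI
    rw [card_Xlift_union]
    exact card_le_of_isIndep_HX hmin hI
  have hmax : ∀ I : Finset ({a : V // a ∈ X ∪ nbhd G X} ⊕ Bool),
      (IsIndep (HX G X) I ∧ I.card = alphaG (HX G X)) ↔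
        (I = Xlift G X ∪ {Sum.inr false} ∨ I = Xlift G X ∪ {Sum.inr true}) := by
    intro I
    refine ⟨fun ⟨hI, hcard⟩ => eq_Xlift_union_of_isIndep_HX hmin hI (hcard.trans halpha), ?_⟩
    rintro (rfl | rfl) <;>
      exact ⟨isIndep_Xlift_union hind _, (card_Xlift_union _).trans halpha.symm⟩
  exact ⟨hmax, (coreG_eq_inter_of_forall_iff hmax).trans Xlift_union_inter_Xlift_union⟩

/-- the only maximum independent sets of `H_X` are `X ∪ {v}` and `X ∪ {w}`;
in particular `core (H_X) = X`. -/
theorem stmt4 {V : Type*} (G : SimpleGraph V) [Fintype V] [DecidableRel G.Adj]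
    (X : Finset V) (hind : IsIndep G X) (hpos : 0 < gdiff G X)
    (hmin : ∀ Y ⊂ X, gdiff G Y < gdiff G X) :
    (∀ I : Finset ({a : V // a ∈ X ∪ nbhd G X} ⊕ Bool),
        (IsIndep (HX G X) I ∧ I.card = alphaG (HX G X)) ↔
          (I = Xlift G X ∪ {Sum.inr false} ∨ I = Xlift G X ∪ {Sum.inr true})) ∧
    coreG (HX G X) = Xlift G X :=
  stmt4_general G X hind hmin
end

section
/- If G is a unicyclic non-König-Egerváry graph with unique cycle C, then no leaf of G is adjacent to a vertex of C. -/
open Classical Finset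

section MyAux

variable {V : Type*}

/-- Any independent set has card at most `alphaG`. -/
lemma my_indep_le [Fintype V] (G : SimpleGraph V) {I : Finset V} (hI : IsIndep G I) :
    I.card ≤ alphaG G := by
  apply Finset.le_sup
  simp [Finset.mem_filter, hI]

lemma my_exists_max_indep [Fintype V] (G : SimpleGraph V) :
    ∃ I : Finset V, IsIndep G I ∧ I.card = alphaG G := by
  obtain ⟨I, hmem, hsup⟩ := Finset.exists_mem_eq_sup
    (Finset.univ.powerset.filter (IsIndep G))
    ⟨∅, by simp [Finset.mem_filter, IsIndep]⟩ Finset.card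
  exact ⟨I, (Finset.mem_filter.mp hmem).2, hsup.symm⟩

lemma my_matching_le [Fintype V] (G : SimpleGraph V) {M : Finset (Sym2 V)}
    (hM : IsMatchingF G M) : M.card ≤ matchNum G := by
  apply Finset.le_sup
  simp [Finset.mem_filter, hM]

lemma my_exists_max_matching [Fintype V] (G : SimpleGraph V) :
    ∃ M : Finset (Sym2 V), IsMatchingF G M ∧ M.card = matchNum G := by
  obtain ⟨M, hmem, hsup⟩ := Finset.exists_mem_eq_sup
    ((Finset.univ : Finset (Finset (Sym2 V))).filter (IsMatchingF G))
    ⟨∅, by simp [Finset.mem_filter, IsMatchingF]⟩ Finset.card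
  exact ⟨M, (Finset.mem_filter.mp hmem).2, hsup.symm⟩

/-- `α(G) + μ(G) ≤ |V|`. -/
lemma my_alpha_add_mu_le [Fintype V] (G : SimpleGraph V) :
    alphaG G + matchNum G ≤ Fintype.card V := by
  classical
  obtain ⟨I, hI, hIcard⟩ := my_exists_max_indep G
  obtain ⟨M, hM, hMcard⟩ := my_exists_max_matching G
  -- for each edge of M pick an endpoint not in I
  have hpick : ∀ e ∈ M, ∃ v, v ∈ e ∧ v ∉ I := by
    intro e he
    have heG : e ∈ G.edgeSet := hM.1 he
    induction e with
    | _ a b =>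
      rw [SimpleGraph.mem_edgeSet] at heG
      by_cases ha : a ∈ I
      · by_cases hb : b ∈ I
        · exact absurd heG (hI a ha b hb)
        · exact ⟨b, by simp, hb⟩
      · exact ⟨a, by simp, ha⟩
  set f : Sym2 V → V := fun e =>
    if h : ∃ v, v ∈ e ∧ v ∉ I then h.choose else (Quot.out e).1 with hf
  have hfspec : ∀ e ∈ M, f e ∈ e ∧ f e ∉ I := by
    intro e he
    have h := hpick e he
    simp only [hf, dif_pos h]
    exact h.choose_spec
  have hinj : Set.InjOn f ↑M := by
    intro e₁ he₁ e₂ he₂ hfe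
    by_contra hne
    exact hM.2 e₁ he₁ e₂ he₂ hne (f e₁) (hfspec e₁ he₁).1
      (hfe ▸ (hfspec e₂ he₂).1)
  have hmaps : ∀ e ∈ M, f e ∈ Finset.univ \ I := by
    intro e he
    simp [Finset.mem_sdiff, (hfspec e he).2]
  have := Finset.card_le_card_of_injOn f hmaps hinj
  have hsd : (Finset.univ \ I).card = Fintype.card V - I.card := by
    rw [Finset.card_sdiff_of_subset (Finset.subset_univ I), Finset.card_univ]
  have hIle : I.card ≤ Fintype.card V := by
    simpa using Finset.card_le_card (Finset.subset_univ I)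
  omega

/-- Each vertex of the support of a walk with positive length lies in some edge. -/
lemma my_support_edge {G : SimpleGraph V} {u v : V} (p : G.Walk u v) (h0 : 0 < p.length) :
    ∀ y ∈ p.support, ∃ e ∈ p.edges, y ∈ e := by
  induction p with
  | nil => simp at h0
  | @cons a b c h q ih =>
    intro y hy
    rw [SimpleGraph.Walk.support_cons, List.mem_cons] at hy
    rcases hy with rfl | hy
    · exact ⟨s(y, b), by simp, by simp⟩
    · rcases Nat.eq_zero_or_pos q.length with hq0 | hqpos
      · have : q.Nil := SimpleGraph.Walk.nil_iff_length_eq.mpr hq0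
        rw [SimpleGraph.Walk.nil_iff_support_eq.mp this] at hy
        simp only [List.mem_singleton] at hy
        subst hy
        exact ⟨s(a, y), by simp, by simp⟩
      · obtain ⟨e, he, hye⟩ := ih hqpos y hy
        exact ⟨e, by simp [he], hye⟩

/-- An acyclic graph with an edge has a leaf. -/
lemma my_exists_leaf [Fintype V] {G : SimpleGraph V} (hac : G.IsAcyclic)
    {a b : V} (hab : G.Adj a b) :
    ∃ x y : V, G.Adj x y ∧ ∀ z, G.Adj x z → z = y := by
  classical
  set P : ℕ → Prop := fun l => ∃ (u v : V) (p : G.Walk u v), p.IsPath ∧ p.length = l with hP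
  have hP1 : P 1 := ⟨a, b, SimpleGraph.Walk.cons hab SimpleGraph.Walk.nil,
    by simp [SimpleGraph.Walk.isPath_def, hab.ne], by simp⟩
  have hVcard : 1 ≤ Fintype.card V := by
    have : Nonempty V := ⟨a⟩
    exact Fintype.card_pos
  set L := Nat.findGreatest P (Fintype.card V) with hL
  have hPL : P L := Nat.findGreatest_spec hVcard hP1
  have hL1 : 1 ≤ L := Nat.le_findGreatest hVcard hP1
  have hmax : ∀ (u v : V) (p : G.Walk u v), p.IsPath → p.length ≤ L := by
    intro u v p hp
    by_contra hgt
    push_neg at hgt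
    exact Nat.findGreatest_is_greatest hgt (le_of_lt hp.length_lt)
      ⟨u, v, p, hp, rfl⟩
  obtain ⟨u, v, p, hp, hplen⟩ := hPL
  cases p with
  | nil => simp at hplen; omega
  | @cons _ w _ h q =>
    refine ⟨u, w, h, ?_⟩
    intro z hz
    by_contra hzw
    have hzu : z ≠ u := fun hh => G.irrefl (hh ▸ hz)
    by_cases hzs : z ∈ (SimpleGraph.Walk.cons h q).support
    · -- cycle
      set p' := (SimpleGraph.Walk.cons h q).takeUntil z hzs with hp'
      have hp'path : p'.IsPath := hp.takeUntil hzs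
      have hnotedge : s(z, u) ∉ p'.edges := by
        intro hmem
        have hmem' : s(z, u) ∈ (SimpleGraph.Walk.cons h q).edges :=
          SimpleGraph.Walk.edges_takeUntil_subset _ hzs hmem
        rw [SimpleGraph.Walk.edges_cons, List.mem_cons] at hmem'
        rcases hmem' with heq | hmem'
        · rw [Sym2.eq_iff] at heq
          rcases heq with ⟨hzu', _⟩ | ⟨hzw', _⟩
          · exact hzu hzu'
          · exact hzw hzw'
        · have : u ∈ q.support := SimpleGraph.Walk.snd_mem_support_of_mem_edges q hmem'
          exact ((SimpleGraph.Walk.cons_isPath_iff h q).mp hp).2 this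
      exact hac _ ((SimpleGraph.Walk.cons_isCycle_iff p' hz.symm).mpr ⟨hp'path, hnotedge⟩)
    · -- longer path
      have hlong : (SimpleGraph.Walk.cons hz.symm (SimpleGraph.Walk.cons h q)).IsPath :=
        hp.cons hzs
      have := hmax _ _ _ hlong
      simp only [SimpleGraph.Walk.length_cons] at this hplen
      omega

/-- Edges of the deleted graph contain neither `x` nor `y`. -/
lemma my_del_edge {G : SimpleGraph V} {x y : V} {e : Sym2 V}
    (he : e ∈ (G.deleteEdges {e | x ∈ e ∨ y ∈ e}).edgeSet) : x ∉ e ∧ y ∉ e := by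
  induction e with
  | _ a b =>
    rw [SimpleGraph.mem_edgeSet, SimpleGraph.deleteEdges_adj] at he
    have := he.2
    simp only [Set.mem_setOf_eq, not_or] at this
    exact this

lemma my_matchNum_del [Fintype V] {G : SimpleGraph V} {x y : V} (hxy : G.Adj x y) :
    matchNum (G.deleteEdges {e | x ∈ e ∨ y ∈ e}) + 1 ≤ matchNum G := by
  classical
  set H := G.deleteEdges {e | x ∈ e ∨ y ∈ e} with hH
  obtain ⟨M, hM, hMcard⟩ := my_exists_max_matching H
  have hxyM : s(x, y) ∉ M := by
    intro hmem
    exact (my_del_edge (hM.1 hmem)).1 (by simp)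
  have hM' : IsMatchingF G (insert s(x, y) M) := by
    constructor
    · intro e he
      rw [Finset.coe_insert, Set.mem_insert_iff] at he
      rcases he with rfl | he
      · exact hxy
      · exact SimpleGraph.edgeSet_mono (SimpleGraph.deleteEdges_le _) (hM.1 he)
    · intro e₁ he₁ e₂ he₂ hne v hv
      rw [Finset.mem_insert] at he₁ he₂
      rcases he₁ with rfl | he₁ <;> rcases he₂ with rfl | he₂
      · exact absurd rfl hne
      · rw [Sym2.mem_iff] at hv
        rcases hv with rfl | rfl
        · exact (my_del_edge (hM.1 he₂)).1
        · exact (my_del_edge (hM.1 he₂)).2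
      · intro hv2
        rw [Sym2.mem_iff] at hv2
        rcases hv2 with rfl | rfl
        · exact (my_del_edge (hM.1 he₁)).1 hv
        · exact (my_del_edge (hM.1 he₁)).2 hv
      · exact hM.2 e₁ he₁ e₂ he₂ hne v hv
  have := my_matching_le G hM'
  rw [Finset.card_insert_of_notMem hxyM] at this
  omega

lemma my_alpha_del [Fintype V] {G : SimpleGraph V} {x y : V} (hxy : G.Adj x y)
    (hleaf : ∀ z, G.Adj x z → z = y) :
    alphaG (G.deleteEdges {e | x ∈ e ∨ y ∈ e}) ≤ alphaG G + 1 := by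
  classical
  set H := G.deleteEdges {e | x ∈ e ∨ y ∈ e} with hH
  obtain ⟨I, hI, hIcard⟩ := my_exists_max_indep H
  have hindep : IsIndep G (insert x (I.erase y)) := by
    intro a ha b hb hab
    rw [Finset.mem_insert] at ha hb
    have hyx : y ≠ x := fun hh => G.irrefl (hh ▸ hxy)
    rcases ha with rfl | ha
    · rcases hb with rfl | hb
      · exact G.irrefl hab
      · have : b = y := hleaf b hab
        exact (Finset.ne_of_mem_erase hb) this
    · rcases hb with rfl | hb
      · have : a = y := hleaf a hab.symm
        exact (Finset.ne_of_mem_erase ha) this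
      · have hay : a ≠ y := Finset.ne_of_mem_erase ha
        have hby : b ≠ y := Finset.ne_of_mem_erase hb
        have hax : a ≠ x := by
          rintro rfl
          exact hby (hleaf b hab)
        have hbx : b ≠ x := by
          rintro rfl
          exact hay (hleaf a hab.symm)
        have : H.Adj a b := by
          rw [hH, SimpleGraph.deleteEdges_adj]
          refine ⟨hab, ?_⟩
          simp only [Set.mem_setOf_eq, Sym2.mem_iff, not_or]
          exact ⟨⟨fun hh => hax hh.symm, fun hh => hbx hh.symm⟩,
            fun hh => hay hh.symm, fun hh => hby hh.symm⟩
        exact hI a (Finset.mem_of_mem_erase ha) b (Finset.mem_of_mem_erase hb) this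
  have h1 := my_indep_le G hindep
  have h2 : (I.erase y).card ≤ (insert x (I.erase y)).card :=
    Finset.card_le_card (Finset.subset_insert _ _)
  have h3 : I.card ≤ (I.erase y).card + 1 := by
    by_cases hy : y ∈ I
    · rw [Finset.card_erase_of_mem hy]
      omega
    · rw [Finset.erase_eq_of_notMem hy]; omega
  omega

/-- Forests satisfy `α + μ ≥ n`. -/
lemma my_forest_ge : ∀ (n : ℕ) {V : Type*} [Fintype V] (H : SimpleGraph V),
    H.edgeSet.ncard ≤ n → H.IsAcyclic → Fintype.card V ≤ alphaG H + matchNum H := by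
  intro n
  induction n with
  | zero =>
    intro V _ H hcard _
    have hempty : H.edgeSet = ∅ := by
      have := Set.ncard_eq_zero (Set.toFinite H.edgeSet) |>.mp (Nat.le_zero.mp hcard)
      exact this
    have hindep : IsIndep H (Finset.univ : Finset V) := by
      intro a _ b _ hab
      have : s(a, b) ∈ H.edgeSet := hab
      rw [hempty] at this
      exact this
    have := my_indep_le H hindep
    rw [Finset.card_univ] at this
    omega
  | succ n ih =>
    intro V _ H hcard hac
    rcases Set.eq_empty_or_nonempty H.edgeSet with hempty | ⟨e, he⟩
    · have hindep : IsIndep H (Finset.univ : Finset V) := by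
        intro a _ b _ hab
        have : s(a, b) ∈ H.edgeSet := hab
        rw [hempty] at this
        exact this
      have := my_indep_le H hindep
      rw [Finset.card_univ] at this
      omega
    · obtain ⟨a, b, hab⟩ : ∃ a b : V, H.Adj a b := by
        induction e with
        | _ a b => exact ⟨a, b, he⟩
      obtain ⟨x, y, hxy, hleaf⟩ := my_exists_leaf hac hab
      set H' := H.deleteEdges {e | x ∈ e ∨ y ∈ e} with hH'
      have hsub : H'.edgeSet ⊂ H.edgeSet := by
        constructor
        · exact SimpleGraph.edgeSet_mono (SimpleGraph.deleteEdges_le _)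
        · intro hsup
          have : s(x, y) ∈ H'.edgeSet := hsup hxy
          exact (my_del_edge this).1 (by simp)
      have hcard' : H'.edgeSet.ncard ≤ n := by
        have := Set.ncard_lt_ncard hsub (Set.toFinite H.edgeSet)
        omega
      have hac' : H'.IsAcyclic := by
        intro u c hc
        have hsub' : ∀ e ∈ c.edges, e ∈ H.edgeSet := fun e hee =>
          SimpleGraph.edgeSet_mono (SimpleGraph.deleteEdges_le _) (c.edges_subset_edgeSet hee)
        exact hac _ (hc.transfer hsub')
      have hih := ih H' hcard' hac'
      have h1 := my_alpha_del hxy hleaf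
      have h2 := my_matchNum_del hxy
      rw [← hH'] at h1 h2
      omega

end MyAux

/-- a unicyclic non-König-Egerváry graph has no leaf adjacent to its cycle. -/
theorem stmt13 {V : Type*} (G : SimpleGraph V) [Fintype V] [DecidableEq V] [DecidableRel G.Adj]
    (u : V) (C : G.Walk u u) (hC : C.IsCycle)
    (huniq : ∀ (u' : V) (C' : G.Walk u' u'), C'.IsCycle →
      C'.edges.toFinset = C.edges.toFinset)
    (hnonKE : alphaG G + matchNum G ≠ Fintype.card V) :
    ∀ x y : V, G.degree x = 1 → G.Adj x y → y ∉ C.support := by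
  intro x y hdeg hadj hy
  have hcard1 : (G.neighborFinset x).card = 1 := hdeg
  have hleaf : ∀ z, G.Adj x z → z = y := by
    intro z hz
    have h1 : z ∈ G.neighborFinset x := by rwa [SimpleGraph.mem_neighborFinset]
    have h2 : y ∈ G.neighborFinset x := by rwa [SimpleGraph.mem_neighborFinset]
    exact Finset.card_le_one.mp (le_of_eq hcard1) z h1 y h2
  set H' := G.deleteEdges {e | x ∈ e ∨ y ∈ e} with hH'
  have hac' : H'.IsAcyclic := by
    intro u' c hc
    have hsub' : ∀ e ∈ c.edges, e ∈ G.edgeSet := fun e hee =>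
      SimpleGraph.edgeSet_mono (SimpleGraph.deleteEdges_le _) (c.edges_subset_edgeSet hee)
    have hcyc := hc.transfer hsub'
    have hedges := huniq _ _ hcyc
    obtain ⟨e, heC, hye⟩ := my_support_edge C (by have := hC.three_le_length; omega) y hy
    have heC' : e ∈ (c.transfer G hsub').edges := by
      rw [← List.mem_toFinset, hedges, List.mem_toFinset]
      exact heC
    rw [SimpleGraph.Walk.edges_transfer] at heC'
    exact (my_del_edge (c.edges_subset_edgeSet heC')).2 hye
  have hforest := my_forest_ge (H'.edgeSet.ncard) H' le_rfl hac'
  have h1 := my_alpha_del hadj hleaf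
  have h2 := my_matchNum_del hadj
  have h3 := my_alpha_add_mu_le G
  rw [← hH'] at h1 h2
  omega
end
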